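/- The relations ◁ and ◀ on Pre(X) are partial orders. For a fixed preorder P on X: (a) (underline(P), ◁) and (overline(P), ◀) are partially ordered sets whose order is induced from (Pre(X), ⪯); (b) P and b(P) = P ∧ P^op are the unique maximal and minimal elements of (underline(P), ◁), while c(P) = P ∨ P^op and P are the unique maximal and minimal elements of (overline(P), ◀); (c) when X is finite, (underline(P), ◁) is a lattice with meet given by ∧ of Pre(X) and join of R₁, R₂ given by P ∧ (P^op ∨ R₁ ∨ R₂); (d) when X is finite, (overline(P), ◀) is a lattice with join given by ∨ of Pre(X) and meet of Q₁, Q₂ given by P ∨ (P^op ∧ Q₁ ∧ Q₂). -/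

import Mathlib

open scoped Classical

/-- A preorder on `X`, bundled as a reflexive and transitive relation. -/
structure Preo (X : Type*) where
  le : X → X → Prop
  le_refl : ∀ x, le x x
  le_trans : ∀ {x y z}, le x y → le y z → le x z

namespace Preo

variable {X : Type*}

/-- The refinement partial order `P ⪯ Q` on preorders: `x ≤_P y` implies `x ≤_Q y`. -/
def Le (P Q : Preo X) : Prop := ∀ ⦃a b⦄, P.le a b → Q.le a b

/-- The opposite preorder. -/
def op (P : Preo X) : Preo X where
  le a b := P.le b a
  le_refl x := P.le_refl x
  le_trans h h' := P.le_trans h' h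

/-- The meet (pointwise intersection) of two preorders. -/
def meet (P Q : Preo X) : Preo X where
  le a b := P.le a b ∧ Q.le a b
  le_refl x := ⟨P.le_refl x, Q.le_refl x⟩
  le_trans h h' := ⟨P.le_trans h.1 h'.1, Q.le_trans h.2 h'.2⟩

/-- The join of two preorders: zigzag chains, i.e. the reflexive-transitive closure
of the union of the two relations. -/
def join (P Q : Preo X) : Preo X where
  le a b := Relation.ReflTransGen (fun u v => P.le u v ∨ Q.le u v) a b
  le_refl _ := Relation.ReflTransGen.refl
  le_trans h h' := Relation.ReflTransGen.trans h h'

/-- The bubble relation: `a` and `b` lie in the same bubble of `P`. -/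
def bubRel (P : Preo X) (a b : X) : Prop := P.le a b ∧ P.le b a

/-- `R ◁ P` : `R` is a subdivision of `P`, i.e. `R ⪯ P` and `R = P ∧ (P^op ∨ R)`. -/
def Subdiv (R P : Preo X) : Prop := R.Le P ∧ R = P.meet (P.op.join R)

/-- `P ◀ Q` : `Q` is a contraction of `P`, i.e. `P ⪯ Q` and `Q = P ∨ (P^op ∧ Q)`. -/
def Contr (P Q : Preo X) : Prop := P.Le Q ∧ Q = P.join (P.op.meet Q)

/-- `K` is a convex subset for the preorder `P`. -/
def ConvexIn (P : Preo X) (K : Set X) : Prop :=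
  ∀ ⦃x y z⦄, x ∈ K → y ∈ K → P.le x z → P.le z y → z ∈ K

/-- `K` is connected for (the restriction to `K` of) the preorder `P`:
any two of its elements are joined by a zigzag chain of comparabilities within `K`. -/
def ConnectedIn (P : Preo X) (K : Set X) : Prop :=
  ∀ ⦃x y⦄, x ∈ K → y ∈ K →
    Relation.ReflTransGen (fun u v => u ∈ K ∧ v ∈ K ∧ (P.le u v ∨ P.le v u)) x y

/-- A total preorder. -/
def Total (P : Preo X) : Prop := ∀ a b, P.le a b ∨ P.le b a

/-- `L` is a linear extension of `P`: `L` is total, `P ⪯ L`, and the bubbles coincide. -/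
def IsLinExt (P L : Preo X) : Prop :=
  L.Total ∧ P.Le L ∧ ∀ a b, P.bubRel a b ↔ L.bubRel a b

/-- A finite down-set of the preorder `P`. -/
def IsDownset (P : Preo X) (A : Finset X) : Prop :=
  ∀ ⦃x y⦄, y ∈ A → P.le x y → x ∈ A

/-- A convex finite subset of the preorder `P`. -/
def ConvexF (P : Preo X) (C : Finset X) : Prop :=
  ∀ ⦃x y z⦄, x ∈ C → y ∈ C → P.le x z → P.le z y → z ∈ C

/-- The down-set generated by a finite set `C`. -/
noncomputable def downClosure [Fintype X] (P : Preo X) (C : Finset X) : Finset X :=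
  Finset.univ.filter (fun x => ∃ y ∈ C, P.le x y)

/-- The bubble of an element `a`. -/
noncomputable def bubble [Fintype X] (P : Preo X) (a : X) : Finset X :=
  Finset.univ.filter (fun x => P.le a x ∧ P.le x a)

/-- The set of bubbles of `P`. -/
noncomputable def bubbles [Fintype X] (P : Preo X) : Finset (Finset X) :=
  Finset.univ.image (fun a => P.bubble a)

/-- `R` is a positive sub-preorder of `P`: in any loop
`x = x₀ ≤_R x₁ ≥_P x₂ ≤_R ⋯ ≤_R x_{2k-1} ≥_P x_{2k} = x`,
every descending step `≥_P` is actually `≥_R`. -/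
def PositiveSub (R P : Preo X) : Prop :=
  ∀ (k : ℕ) (x : ℕ → X), x (2 * k) = x 0 →
    (∀ i < k, R.le (x (2 * i)) (x (2 * i + 1))) →
    (∀ i < k, P.le (x (2 * i + 2)) (x (2 * i + 1))) →
    ∀ i < k, R.le (x (2 * i + 2)) (x (2 * i + 1))

end Preo

section Submod

variable {I : Type*} [Fintype I] [DecidableEq I]

/-- A function `z : P(I) → ℝ ∪ {∞}` is submodular if
`z(S ∪ T) + z(S ∩ T) ≤ z(S) + z(T)` for all `S, T`. -/
def Submodular (z : Finset I → WithTop ℝ) : Prop :=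
  ∀ S T : Finset I, z (S ∪ T) + z (S ∩ T) ≤ z S + z T

/-- The corestriction `z_{/A}` : `U ↦ z(A ∪ U) − z(A)` (meaningful when `z A ≠ ⊤`). -/
noncomputable def coRes (z : Finset I → WithTop ℝ) (A U : Finset I) : WithTop ℝ :=
  z (A ∪ U) + ((-(WithTop.untopD 0 (z A)) : ℝ) : WithTop ℝ)

/-- The extended generalized permutahedron of `z`:
`x_I = z(I)` and `x_A ≤ z(A)` whenever `z(A) < ∞`. -/
def EGP (z : Finset I → WithTop ℝ) : Set (I → ℝ) :=
  {x | ((∑ i, x i : ℝ) : WithTop ℝ) = z Finset.univ ∧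
       ∀ A : Finset I, ((∑ i ∈ A, x i : ℝ) : WithTop ℝ) ≤ z A}

/-- `z` restricted to subsets of `C` decomposes as the product of its restrictions to `S`
and `T`, where `C = S ⊔ T`. -/
def SplitsAlong (z : Finset I → WithTop ℝ) (C S T : Finset I) : Prop :=
  Disjoint S T ∧ S ∪ T = C ∧ ∀ E ⊆ C, z E = z (E ∩ S) + z (E ∩ T)

/-- `z` restricted to subsets of `C` is indecomposable. -/
def IndecompOn (z : Finset I → WithTop ℝ) (C : Finset I) : Prop :=
  ∀ S T : Finset I, S.Nonempty → T.Nonempty → ¬ SplitsAlong z C S T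

/-- `fam` is the partition underlying a factorization of `z` into indecomposable
extended Boolean functions. -/
def IsIndecompFactorization (z : Finset I → WithTop ℝ) (fam : Finset (Finset I)) : Prop :=
  (∀ B ∈ fam, B.Nonempty) ∧
  (∀ B ∈ fam, ∀ B' ∈ fam, B ≠ B' → Disjoint B B') ∧
  fam.sup id = Finset.univ ∧
  (∀ E : Finset I, z E = ∑ B ∈ fam, z (E ∩ B)) ∧
  ∀ B ∈ fam, IndecompOn z B

/-- A family of finite subsets of `I` forming a topology on `I`. -/
def IsTopologyFam (F : Set (Finset I)) : Prop :=
  ∅ ∈ F ∧ Finset.univ ∈ F ∧ (∀ A ∈ F, ∀ B ∈ F, A ∪ B ∈ F) ∧ ∀ A ∈ F, ∀ B ∈ F, A ∩ B ∈ F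

/-- The preorder `P` is compatible with the submodular function `z`. -/
def Compatible (z : Finset I → WithTop ℝ) (P : Preo I) : Prop :=
  (∀ A : Finset I, P.IsDownset A → z A ≠ ⊤) ∧
  ∀ A B : Finset I, P.IsDownset A → P.IsDownset B → A ⊆ B →
    ∀ C₁ C₂ : Finset I, Disjoint C₁ C₂ → C₁ ∪ C₂ = B \ A →
      (∀ x ∈ C₁, ∀ y ∈ C₂, ¬ P.le x y ∧ ¬ P.le y x) →
      ∀ U ⊆ B \ A, coRes z A U = coRes z A (U ∩ C₁) + coRes z A (U ∩ C₂)

/-- For a convex subset `C` of `P`, the function `z_C : U ↦ z(A ∪ U) − z(A)`, where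
`A = (↓C) \ C` with `↓C` the down-set generated by `C`. -/
noncomputable def zConv (z : Finset I → WithTop ℝ) (P : Preo I) (C U : Finset I) :
    WithTop ℝ :=
  coRes z (P.downClosure C \ C) U

/-- The preorder `P` conforms to the submodular function `z`: it is compatible with `z`
and every product decomposition of `z_C`, for `C` convex in `P`, comes from a
disconnected decomposition of the preorder induced on `C`. -/
def Conforms (z : Finset I → WithTop ℝ) (P : Preo I) : Prop :=
  Compatible z P ∧
  ∀ C : Finset I, P.ConvexF C →
    ∀ C₁ C₂ : Finset I, Disjoint C₁ C₂ → C₁ ∪ C₂ = C →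
      (∀ U ⊆ C, zConv z P C U = zConv z P C (U ∩ C₁) + zConv z P C (U ∩ C₂)) →
      ∀ x ∈ C₁, ∀ y ∈ C₂, ¬ P.le x y ∧ ¬ P.le y x

/-- The preorder `pre(z)` associated to `z`: `x ≤ y` iff every `A` with `z(A) < ∞`
("open set") containing `y` contains `x`. -/
def preZ (z : Finset I → WithTop ℝ) : Preo I where
  le x y := ∀ A : Finset I, z A ≠ ⊤ → y ∈ A → x ∈ A
  le_refl _ := fun _ _ h => h
  le_trans h h' := fun A hA hy => h A hA (h' A hA hy)

/-- The preorder associated (by the Alexandroff correspondence) to a family of subsets. -/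
def preOfFam (F : Set (Finset I)) : Preo I where
  le x y := ∀ A ∈ F, y ∈ A → x ∈ A
  le_refl _ := fun _ _ h => h
  le_trans h h' := fun A hA hy => h A hA (h' A hA hy)

/-- `Alin(P, z)`: the affine space cut out by `x_A = z(A)` for `A` a down-set of `P`. -/
def Alin (z : Finset I → WithTop ℝ) (P : Preo I) : Set (I → ℝ) :=
  {x | ∀ A : Finset I, P.IsDownset A → ((∑ i ∈ A, x i : ℝ) : WithTop ℝ) = z A}

/-- `AlinBu(P, z)`: the affine space cut out by `x_C = z_C(C)` for `C` a bubble of `P`. -/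
def AlinBu (z : Finset I → WithTop ℝ) (P : Preo I) : Set (I → ℝ) :=
  {x | ∀ a : I, ((∑ i ∈ P.bubble a, x i : ℝ) : WithTop ℝ) = zConv z P (P.bubble a) (P.bubble a)}

/-- `Φ_z(P)`: the (possibly empty) face of `Π(z)` cut out by the equalities `x_A = z(A)`
for `A` a down-set of `P`. -/
def Phi (z : Finset I → WithTop ℝ) (P : Preo I) : Set (I → ℝ) :=
  {x | x ∈ EGP z ∧ ∀ A : Finset I, P.IsDownset A → ((∑ i ∈ A, x i : ℝ) : WithTop ℝ) = z A}

/-- `Ψ_z(G)`: the family of sets `A` with `z(A) < ∞` on which `x_A = z(A)` for all `x ∈ G`. -/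
def PsiFam (z : Finset I → WithTop ℝ) (G : Set (I → ℝ)) : Set (Finset I) :=
  {A | z A ≠ ⊤ ∧ ∀ x ∈ G, ((∑ i ∈ A, x i : ℝ) : WithTop ℝ) = z A}

/-- `Ψ_z(G)` as a preorder. -/
def PsiPre (z : Finset I → WithTop ℝ) (G : Set (I → ℝ)) : Preo I :=
  preOfFam (PsiFam z G)

/-- `z_P = ∏_{C ∈ b(P)} z_C`: the product over all bubbles of `P`. -/
noncomputable def zP (z : Finset I → WithTop ℝ) (P : Preo I) : Finset I → WithTop ℝ :=
  fun E => ∑ C ∈ P.bubbles, zConv z P C (E ∩ C)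

/-- The restriction `z|_S` of `z` to subsets of `S`. -/
def restrictFn (z : Finset I → WithTop ℝ) (S : Finset I) :
    Finset {x : I // x ∈ S} → WithTop ℝ :=
  fun U => z (U.map (Function.Embedding.subtype fun x => x ∈ S))

/-- The corestriction `z_{/S}` of `z`, on subsets of `I ∖ S`. -/
noncomputable def coresFn (z : Finset I → WithTop ℝ) (S : Finset I) :
    Finset {x : I // x ∉ S} → WithTop ℝ :=
  fun U => z (S ∪ U.map (Function.Embedding.subtype fun x => x ∉ S)) +
    ((-(WithTop.untopD 0 (z S)) : ℝ) : WithTop ℝ)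

/-- The restriction `P|_S` of a preorder to `S`. -/
def restrictPre (P : Preo I) (S : Finset I) : Preo {x : I // x ∈ S} where
  le a b := P.le a b
  le_refl a := P.le_refl a
  le_trans h h' := P.le_trans h h'

/-- The corestriction `P_{/S}` of a preorder, on `I ∖ S`. -/
def coresPre (P : Preo I) (S : Finset I) : Preo {x : I // x ∉ S} where
  le a b := P.le a b
  le_refl a := P.le_refl a
  le_trans h h' := P.le_trans h h'

end Submod

/-!
Ordered by `⪯`, with `meet` and `join` as infimum and supremum, `Pre(X)` is a lattice in which
`R ◁ P` says `R ≤ P` and `P ⊓ (Pᵒᵖ ⊔ R) ≤ R`, and `P ◀ Q` says `P ≤ Q` and `Q ≤ P ⊔ (Pᵒᵖ ⊓ Q)`.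
As `P ⊓ (Pᵒᵖ ⊔ R)` is the least subdivision of `P` above `R`, and `P ⊔ (Pᵒᵖ ⊓ Q)` the greatest
contraction of `P` below `Q`, parts (a)–(d) are lattice algebra. Only transitivity needs zigzag
chains: a chain closed up into a cycle of a preorder `J` stays in one bubble of `J`, so each of its
steps can be reversed in `J`. For `R ◁ S ◁ P` this turns the descending `P`-steps of a chain
witnessing `P ⊓ (Pᵒᵖ ⊔ R)` into descending `S`-steps; for `P ◀ Q ◀ T` it lets the chain of
`P ⊔ (Pᵒᵖ ⊓ Q)` behind a descending `Q`-step inside a `T`-bubble be run backwards.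
-/

open Relation

namespace Preo

variable {X : Type*}

instance (P : Preo X) : Std.Refl P.le := ⟨P.le_refl⟩

instance (P : Preo X) : IsTrans X P.le := ⟨fun _ _ _ => P.le_trans⟩

theorem ext_le {P Q : Preo X} (h : ∀ a b, P.le a b ↔ Q.le a b) : P = Q := by
  obtain ⟨le, _, _⟩ := P
  obtain ⟨le', _, _⟩ := Q
  obtain rfl : le = le' := funext₂ fun a b => propext (h a b)
  rfl

instance : Lattice (Preo X) where
  le := Le
  le_refl _ _ _ := id
  le_trans _ _ _ hPQ hQR _ _ h := hQR (hPQ h)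
  le_antisymm _ _ hPQ hQP := ext_le fun _ _ => ⟨(hPQ ·), (hQP ·)⟩
  inf := meet
  inf_le_left _ _ _ _ := And.left
  inf_le_right _ _ _ _ := And.right
  le_inf _ _ _ hQ hR _ _ h := ⟨hQ h, hR h⟩
  sup := join
  le_sup_left _ _ _ _ h := ReflTransGen.single (Or.inl h)
  le_sup_right _ _ _ _ h := ReflTransGen.single (Or.inr h)
  sup_le _ _ R hP hQ _ _ h :=
    reflTransGen_le_of_le (r := R.le) (fun _ _ huv => huv.elim (hP ·) (hQ ·)) _ _ h

theorem op_le_op {P Q : Preo X} (h : P ≤ Q) : P.op ≤ Q.op := fun _ _ hab => h hab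

theorem subdiv_iff {R P : Preo X} : Subdiv R P ↔ R ≤ P ∧ P ⊓ (P.op ⊔ R) ≤ R :=
  ⟨fun h => ⟨h.1, h.2.symm.le⟩, fun h => ⟨h.1, le_antisymm (le_inf h.1 le_sup_right) h.2⟩⟩

theorem contr_iff {P Q : Preo X} : Contr P Q ↔ P ≤ Q ∧ Q ≤ P ⊔ (P.op ⊓ Q) :=
  ⟨fun h => ⟨h.1, h.2.le⟩, fun h => ⟨h.1, le_antisymm h.2 (sup_le h.1 inf_le_right)⟩⟩

theorem subdiv_inf_op_sup (P R : Preo X) : Subdiv (P ⊓ (P.op ⊔ R)) P :=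
  subdiv_iff.2 ⟨inf_le_left, inf_le_inf_left P (sup_le le_sup_left inf_le_right)⟩

theorem contr_sup_op_inf (P Q : Preo X) : Contr P (P ⊔ (P.op ⊓ Q)) :=
  contr_iff.2 ⟨le_sup_left, sup_le_sup_left (le_inf inf_le_left le_sup_right) P⟩

theorem Subdiv.inf_op_sup_le {S P R : Preo X} (hS : Subdiv S P) (hR : R ≤ S) :
    P ⊓ (P.op ⊔ R) ≤ S :=
  (inf_le_inf_left P (sup_le_sup_left hR _)).trans (subdiv_iff.1 hS).2

theorem Contr.le_sup_op_inf {P T Q : Preo X} (hT : Contr P T) (hQ : T ≤ Q) :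
    T ≤ P ⊔ (P.op ⊓ Q) :=
  (contr_iff.1 hT).2.trans (sup_le_sup_left (inf_le_inf_left _ hQ) P)

theorem Subdiv.subdiv_of_le {R₁ R₂ P : Preo X} (hR₁ : Subdiv R₁ P) (hR₂P : R₂ ≤ P)
    (h : R₁ ≤ R₂) : Subdiv R₁ R₂ :=
  subdiv_iff.2 ⟨h, (inf_le_inf hR₂P (sup_le_sup_right (op_le_op hR₂P) R₁)).trans
    (subdiv_iff.1 hR₁).2⟩

theorem Contr.contr_of_le {P Q₁ Q₂ : Preo X} (hQ₂ : Contr P Q₂) (hPQ₁ : P ≤ Q₁)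
    (h : Q₁ ≤ Q₂) : Contr Q₁ Q₂ :=
  contr_iff.2 ⟨h, (contr_iff.1 hQ₂).2.trans
    (sup_le_sup hPQ₁ (inf_le_inf_right Q₂ (op_le_op hPQ₁)))⟩

theorem subdiv_inf_op (P : Preo X) : Subdiv (P ⊓ P.op) P :=
  subdiv_iff.2 ⟨inf_le_left, inf_le_inf_left P (sup_le le_rfl inf_le_right)⟩

theorem contr_sup_op (P : Preo X) : Contr P (P ⊔ P.op) :=
  contr_iff.2 ⟨le_sup_left, sup_le_sup_left (le_inf le_rfl le_sup_right) P⟩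

theorem Subdiv.inf_op_le {R P : Preo X} (hR : Subdiv R P) : P ⊓ P.op ≤ R :=
  (inf_le_inf_left P le_sup_left).trans (subdiv_iff.1 hR).2

theorem Contr.le_sup_op {P Q : Preo X} (hQ : Contr P Q) : Q ≤ P ⊔ P.op :=
  (contr_iff.1 hQ).2.trans (sup_le_sup_left inf_le_left P)

theorem Subdiv.inf {R₁ R₂ P : Preo X} (h₁ : Subdiv R₁ P) (h₂ : Subdiv R₂ P) :
    Subdiv (R₁ ⊓ R₂) P :=
  subdiv_iff.2 ⟨inf_le_left.trans (subdiv_iff.1 h₁).1,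
    le_inf (h₁.inf_op_sup_le inf_le_left) (h₂.inf_op_sup_le inf_le_right)⟩

theorem Contr.sup {P Q₁ Q₂ : Preo X} (h₁ : Contr P Q₁) (h₂ : Contr P Q₂) :
    Contr P (Q₁ ⊔ Q₂) :=
  contr_iff.2 ⟨(contr_iff.1 h₁).1.trans le_sup_left,
    sup_le (h₁.le_sup_op_inf le_sup_left) (h₂.le_sup_op_inf le_sup_right)⟩

theorem reflTransGen_and_le_of_le {J : Preo X} {r : X → X → Prop}
    (hr : ∀ u v, r u v → J.le u v) {a b : X} (hab : ReflTransGen r a b) (hba : J.le b a) :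
    ReflTransGen (fun u v => r u v ∧ J.le v u) a b := by
  induction hab with
  | refl => exact .refl
  | @tail c d hac hcd ih =>
    have hJac : J.le a c := reflTransGen_le_of_le (r := J.le) hr _ _ hac
    exact (ih (J.le_trans (hr _ _ hcd) hba)).tail ⟨hcd, J.le_trans hba hJac⟩

theorem Subdiv.inf_op_sup_le_op_sup {S P R : Preo X} (hS : Subdiv S P) (hR : R ≤ S) :
    P ⊓ (P.op ⊔ R) ≤ S.op ⊔ R := by
  rintro a b ⟨hab, hchain⟩
  have hstep : ∀ u v, P.op.le u v ∨ R.le u v → (P.op ⊔ S).le u v :=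
    fun u v huv => ReflTransGen.single (huv.imp_right (hR ·))
  refine ReflTransGen.mono ?_ _ _
    (reflTransGen_and_le_of_le hstep hchain (ReflTransGen.single (Or.inl hab)))
  rintro u v ⟨hP | hRuv, hvu⟩
  · exact Or.inl ((subdiv_iff.1 hS).2 ⟨hP, hvu⟩)
  · exact Or.inr hRuv

theorem op_inf_le_sup_op_inf {P T : Preo X} (hPT : P ≤ T) :
    (P ⊔ (P.op ⊓ T)).op ⊓ T ≤ P ⊔ (P.op ⊓ T) := by
  rintro a b ⟨hchain, hab⟩
  have hstep : ∀ u v, P.le u v ∨ (P.op ⊓ T).le u v → T.le u v :=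
    fun u v huv => huv.elim (hPT ·) And.right
  refine ReflTransGen.swap _ _
    (ReflTransGen.mono ?_ _ _ (reflTransGen_and_le_of_le hstep hchain hab))
  rintro u v ⟨hP | ⟨hP, -⟩, hvu⟩
  · exact Or.inr ⟨hP, hvu⟩
  · exact Or.inl hP

theorem subdiv_trans {R S P : Preo X} (h₁ : Subdiv R S) (h₂ : Subdiv S P) : Subdiv R P := by
  have hRS := (subdiv_iff.1 h₁).1
  refine subdiv_iff.2 ⟨hRS.trans (subdiv_iff.1 h₂).1, ?_⟩
  calc P ⊓ (P.op ⊔ R) ≤ S ⊓ (S.op ⊔ R) :=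
        le_inf (h₂.inf_op_sup_le hRS) (h₂.inf_op_sup_le_op_sup hRS)
    _ ≤ R := (subdiv_iff.1 h₁).2

theorem contr_trans {P Q T : Preo X} (h₁ : Contr P Q) (h₂ : Contr Q T) : Contr P T := by
  have hQT := (contr_iff.1 h₂).1
  have hQ : Q ≤ P ⊔ (P.op ⊓ T) := h₁.le_sup_op_inf hQT
  have hPT := (contr_iff.1 h₁).1.trans hQT
  refine contr_iff.2 ⟨hPT, ?_⟩
  calc T ≤ Q ⊔ (Q.op ⊓ T) := (contr_iff.1 h₂).2
    _ ≤ P ⊔ (P.op ⊓ T) :=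
        sup_le hQ ((inf_le_inf_right T (op_le_op hQ)).trans (op_inf_le_sup_op_inf hPT))

theorem subdiv_isPartialOrder : IsPartialOrder (Preo X) Subdiv where
  refl _ := subdiv_iff.2 ⟨le_rfl, inf_le_left⟩
  trans _ _ _ := subdiv_trans
  antisymm _ _ h₁ h₂ := le_antisymm h₁.1 h₂.1

theorem contr_isPartialOrder : IsPartialOrder (Preo X) Contr where
  refl _ := contr_iff.2 ⟨le_rfl, le_sup_left⟩
  trans _ _ _ := contr_trans
  antisymm _ _ h₁ h₂ := le_antisymm h₁.1 h₂.1

end Preo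

/-- `◁` and `◀` are partial orders on `Pre(X)`. For fixed `P`:
(a) on `underline(P)` (resp. `overline(P)`) the order `◁` (resp. `◀`) is induced from `⪯`;
(b) `P` and `b(P) = P ∧ P^op` are the maximum and minimum of `(underline(P), ◁)`, and
`c(P) = P ∨ P^op` and `P` are the maximum and minimum of `(overline(P), ◀)`;
(c) for finite `X`, `(underline(P), ◁)` is a lattice with meet `∧` and join
`R₁, R₂ ↦ P ∧ (P^op ∨ R₁ ∨ R₂)`;
(d) for finite `X`, `(overline(P), ◀)` is a lattice with join `∨` and meet
`Q₁, Q₂ ↦ P ∨ (P^op ∧ Q₁ ∧ Q₂)`. -/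
theorem subdiv_contr_lattices
    {X : Type*} (P : Preo X) :
    IsPartialOrder (Preo X) Preo.Subdiv ∧
    IsPartialOrder (Preo X) Preo.Contr ∧
    -- (a)
    (∀ R₁ R₂ : Preo X, Preo.Subdiv R₁ P → Preo.Subdiv R₂ P →
      (Preo.Subdiv R₁ R₂ ↔ R₁.Le R₂)) ∧
    (∀ Q₁ Q₂ : Preo X, Preo.Contr P Q₁ → Preo.Contr P Q₂ →
      (Preo.Contr Q₁ Q₂ ↔ Q₁.Le Q₂)) ∧
    -- (b)
    Preo.Subdiv (P.meet P.op) P ∧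
    (∀ R : Preo X, Preo.Subdiv R P → Preo.Subdiv (P.meet P.op) R) ∧
    Preo.Contr P (P.join P.op) ∧
    (∀ Q : Preo X, Preo.Contr P Q → Preo.Contr Q (P.join P.op)) ∧
    -- (c)
    (Finite X → ∀ R₁ R₂ : Preo X, Preo.Subdiv R₁ P → Preo.Subdiv R₂ P →
      Preo.Subdiv (R₁.meet R₂) P ∧
      Preo.Subdiv (R₁.meet R₂) R₁ ∧ Preo.Subdiv (R₁.meet R₂) R₂ ∧
      (∀ S : Preo X, Preo.Subdiv S P → Preo.Subdiv S R₁ → Preo.Subdiv S R₂ →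
        Preo.Subdiv S (R₁.meet R₂)) ∧
      Preo.Subdiv (P.meet ((P.op.join R₁).join R₂)) P ∧
      Preo.Subdiv R₁ (P.meet ((P.op.join R₁).join R₂)) ∧
      Preo.Subdiv R₂ (P.meet ((P.op.join R₁).join R₂)) ∧
      (∀ S : Preo X, Preo.Subdiv S P → Preo.Subdiv R₁ S → Preo.Subdiv R₂ S →
        Preo.Subdiv (P.meet ((P.op.join R₁).join R₂)) S)) ∧
    -- (d)
    (Finite X → ∀ Q₁ Q₂ : Preo X, Preo.Contr P Q₁ → Preo.Contr P Q₂ →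
      Preo.Contr P (Q₁.join Q₂) ∧
      Preo.Contr Q₁ (Q₁.join Q₂) ∧ Preo.Contr Q₂ (Q₁.join Q₂) ∧
      (∀ T : Preo X, Preo.Contr P T → Preo.Contr Q₁ T → Preo.Contr Q₂ T →
        Preo.Contr (Q₁.join Q₂) T) ∧
      Preo.Contr P (P.join (P.op.meet (Q₁.meet Q₂))) ∧
      Preo.Contr (P.join (P.op.meet (Q₁.meet Q₂))) Q₁ ∧
      Preo.Contr (P.join (P.op.meet (Q₁.meet Q₂))) Q₂ ∧
      (∀ T : Preo X, Preo.Contr P T → Preo.Contr T Q₁ → Preo.Contr T Q₂ →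
        Preo.Contr T (P.join (P.op.meet (Q₁.meet Q₂))))) := by
  refine ⟨Preo.subdiv_isPartialOrder, Preo.contr_isPartialOrder,
    fun _ _ h₁ h₂ => ⟨fun h => h.1, h₁.subdiv_of_le h₂.1⟩,
    fun _ _ h₁ h₂ => ⟨fun h => h.1, h₂.contr_of_le h₁.1⟩,
    Preo.subdiv_inf_op P, fun _ hR => (Preo.subdiv_inf_op P).subdiv_of_le hR.1 hR.inf_op_le,
    Preo.contr_sup_op P, fun _ hQ => (Preo.contr_sup_op P).contr_of_le hQ.1 hQ.le_sup_op,
    fun _ R₁ R₂ h₁ h₂ => ?_, fun _ Q₁ Q₂ h₁ h₂ => ?_⟩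
  · have hmeet := h₁.inf h₂
    have hjoin := Preo.subdiv_inf_op_sup P (R₁ ⊔ R₂)
    rw [show (P.op.join R₁).join R₂ = P.op ⊔ (R₁ ⊔ R₂) from sup_assoc _ _ _]
    exact ⟨hmeet, hmeet.subdiv_of_le h₁.1 inf_le_left, hmeet.subdiv_of_le h₂.1 inf_le_right,
      fun S hS h₁S h₂S => hS.subdiv_of_le hmeet.1 (le_inf h₁S.1 h₂S.1),
      hjoin, h₁.subdiv_of_le hjoin.1 (le_inf h₁.1 (le_sup_left.trans le_sup_right)),
      h₂.subdiv_of_le hjoin.1 (le_inf h₂.1 (le_sup_right.trans le_sup_right)),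
      fun S hS h₁S h₂S => hjoin.subdiv_of_le hS.1 (hS.inf_op_sup_le (sup_le h₁S.1 h₂S.1))⟩
  · have hjoin := h₁.sup h₂
    have hmeet := Preo.contr_sup_op_inf P (Q₁ ⊓ Q₂)
    exact ⟨hjoin, hjoin.contr_of_le h₁.1 le_sup_left, hjoin.contr_of_le h₂.1 le_sup_right,
      fun T hT hT₁ hT₂ => hT.contr_of_le hjoin.1 (sup_le hT₁.1 hT₂.1),
      hmeet, h₁.contr_of_le hmeet.1 (sup_le h₁.1 (inf_le_right.trans inf_le_left)),
      h₂.contr_of_le hmeet.1 (sup_le h₂.1 (inf_le_right.trans inf_le_right)),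
      fun T hT hT₁ hT₂ => hmeet.contr_of_le hT.1 (hT.le_sup_op_inf (le_inf hT₁.1 hT₂.1))⟩
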